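/- Let d = (7 − √21)/14. Let a, b be real numbers with a ∈ [0, d] and b ∈ [0, d]. Define Ŵ₉(a,b) = (1−d−a)·(d−a)/((1−2d−a)·(1−2d)) + (1−d−a)²·(1−2d−a)·(d−b)/((1−2d−a−b)·(1−2d−b)·(1−2d)·(1−d−b)) + (1−d−a)·(d−a)/((1−2d−a−b)·(1−2d)). Then Ŵ₉(a,b) ≤ Ŵ₉(0,b). -/

import Mathlib

/-!
Each of the three summands of `Ŵ₉` separately is largest at `a = 0`, and the only property of
`d = (7 - √21)/14` that matters is `d ≤ 1/5`. For the first and third summands, clearing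
denominators leaves `a * (c * (1 - a) - d * (1 - d))` with `c = 1 - 2d` resp. `1 - 2d - b`, which
is nonnegative because `c ≥ d`. Writing `u = 1 - 2d - a`, the second summand is
`(u + d)² u / (u - b)` times a factor free of `a`, and `u ↦ (u + d)² u / (u - b)` is increasing
for `u ≥ 2d`; the bound `d ≤ 1/5` is exactly what keeps `u ≥ 1 - 3d` in that range.
-/

/-- The objective function `Ŵ₉` of program (P9). -/
noncomputable def W9hat (d a b : ℝ) : ℝ :=
  (1 - d - a) * (d - a) / ((1 - 2 * d - a) * (1 - 2 * d))
    + (1 - d - a) ^ 2 * (1 - 2 * d - a) * (d - b) /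
        ((1 - 2 * d - a - b) * (1 - 2 * d - b) * (1 - 2 * d) * (1 - d - b))
    + (1 - d - a) * (d - a) / ((1 - 2 * d - a - b) * (1 - 2 * d))

theorem one_sub_sub_mul_sub_div_le {a c d k : ℝ} (ha : 0 ≤ a) (had : a ≤ d) (hdc : d < c)
    (hd1 : d ≤ 1) (hk : 0 < k) :
    (1 - d - a) * (d - a) / ((c - a) * k) ≤ (1 - d) * d / (c * k) := by
  have hgap : d * (1 - d) ≤ c * (1 - a) := by nlinarith
  rw [div_le_div_iff₀ (mul_pos (by linarith) hk) (mul_pos (by linarith) hk)]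
  linear_combination (k * a) * hgap

theorem sq_mul_mul_sub_le {b c d u : ℝ} (hb0 : 0 ≤ b) (hbd : b ≤ d) (hu : 2 * d ≤ u)
    (huc : u ≤ c) :
    (u + d) ^ 2 * u * (c - b) ≤ (c + d) ^ 2 * c * (u - b) := by
  have hd : 0 ≤ d := hb0.trans hbd
  have hS : 0 ≤ c ^ 2 + c * u + u ^ 2 + 2 * d * (c + u) + d ^ 2 := by nlinarith
  have h1 : 2 * d * d ≤ c * (u - d) := mul_le_mul (by linarith) (by linarith) hd (by linarith)
  have h2 : d * (u + d) ≤ u * u := by nlinarith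
  have hE : b * (c ^ 2 + c * u + u ^ 2 + 2 * d * (c + u) + d ^ 2) ≤ u * c * (c + u + 2 * d) := by
    nlinarith [mul_le_mul_of_nonneg_right hbd hS,
      mul_le_mul_of_nonneg_left h1 (by linarith : 0 ≤ c),
      mul_le_mul_of_nonneg_left h2 (by linarith : 0 ≤ u + d),
      mul_le_mul_of_nonneg_right huc (by nlinarith : 0 ≤ u * (u + d))]
  linear_combination (c - u) * hE

theorem W9hat_second_summand_le {a b d : ℝ} (ha0 : 0 ≤ a) (had : a ≤ d) (hb0 : 0 ≤ b)
    (hbd : b ≤ d) (hd : d ≤ 1 / 5) :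
    (1 - d - a) ^ 2 * (1 - 2 * d - a) * (d - b) /
        ((1 - 2 * d - a - b) * (1 - 2 * d - b) * (1 - 2 * d) * (1 - d - b)) ≤
      (1 - d) ^ 2 * (1 - 2 * d) * (d - b) /
        ((1 - 2 * d - b) * (1 - 2 * d - b) * (1 - 2 * d) * (1 - d - b)) := by
  have hK : 0 < (1 - 2 * d - b) * (1 - 2 * d) * (1 - d - b) :=
    mul_pos (mul_pos (by linarith) (by linarith)) (by linarith)
  rw [div_le_div_iff₀ (by simpa only [mul_assoc] using mul_pos (by linarith) hK)
    (by simpa only [mul_assoc] using mul_pos (by linarith) hK)]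
  have key := sq_mul_mul_sub_le (u := 1 - 2 * d - a) (c := 1 - 2 * d) hb0 hbd
    (by linarith) (by linarith)
  linear_combination mul_le_mul_of_nonneg_left key (mul_nonneg (sub_nonneg.2 hbd) hK.le)

/-- Under the constraints of program (P9) with `d = (7−√21)/14`,
the objective `Ŵ₉` does not decrease when `a` is replaced by `0`. -/
theorem W9hat_le (d a b : ℝ)
    (hd : d = (7 - Real.sqrt 21) / 14)
    (ha : a ∈ Set.Icc 0 d) (hb : b ∈ Set.Icc 0 d) :
    W9hat d a b ≤ W9hat d 0 b := by
  obtain ⟨ha0, had⟩ := ha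
  obtain ⟨hb0, hbd⟩ := hb
  have hd5 : d ≤ 1 / 5 := by
    rw [hd]
    nlinarith [Real.sq_sqrt (show (0 : ℝ) ≤ 21 by norm_num), Real.sqrt_nonneg 21]
  have first := one_sub_sub_mul_sub_div_le (c := 1 - 2 * d) (k := 1 - 2 * d) ha0 had
    (by linarith) (by linarith) (by linarith)
  have second := W9hat_second_summand_le ha0 had hb0 hbd hd5
  have third := one_sub_sub_mul_sub_div_le (c := 1 - 2 * d - b) (k := 1 - 2 * d) ha0 had
    (by linarith) (by linarith) (by linarith)
  rw [sub_right_comm _ b a] at third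
  simp only [W9hat, sub_zero]
  linarith
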